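/- arXiv:2102.05695 — 4 statements merged into one kernel-verified Lean document; each statement's English description precedes it below -/
import Mathlib

section
/- For random variables X distributed according to P on a finite sample space and any function φ: X → ℝ, and any distribution Q absolutely continuous with respect to P, we have log(E_P[e^{φ(X)}]) ≥ E_Q[φ(X)] − D(Q‖P), where D denotes the Kullback–Leibler divergence. -/
/-!
The pointwise Fenchel–Young inequality `q u ≤ q log (q / p) + p eᵘ - q` summed over the sample
space gives `E_Q[φ] - D(Q‖P) ≤ E_P[e^φ] - 1`. Applying this to the shifted function
`φ - log E_P[e^φ]`, whose exponential moment is `1`, sharpens `E_P[e^φ] - 1` to `log E_P[e^φ]`.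
-/

open Real Finset

lemma mul_sub_mul_log_div_le {p q : ℝ} (u : ℝ) (hp : 0 ≤ p) (hq : 0 ≤ q) (hpq : p = 0 → q = 0) :
    q * u - q * log (q / p) ≤ p * exp u - q := by
  rcases hq.eq_or_lt with rfl | hq
  · simp only [zero_mul, sub_zero]
    positivity
  have hp : 0 < p := hp.lt_of_ne' fun h => hq.ne' (hpq h)
  calc q * u - q * log (q / p)
      ≤ q * (exp (u - log (q / p)) - 1) := by
        rw [← mul_sub]
        exact mul_le_mul_of_nonneg_left (by linarith [add_one_le_exp (u - log (q / p))]) hq.le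
    _ = p * exp u - q := by
        rw [exp_sub, exp_log (div_pos hq hp)]
        field_simp

lemma sum_mul_sub_sum_mul_log_div_le {X : Type*} [Fintype X] (P Q φ : X → ℝ)
    (hP0 : ∀ x, 0 ≤ P x) (hQ0 : ∀ x, 0 ≤ Q x) (hac : ∀ x, P x = 0 → Q x = 0) :
    ∑ x, Q x * φ x - ∑ x, Q x * log (Q x / P x) ≤ ∑ x, P x * exp (φ x) - ∑ x, Q x := by
  rw [← sum_sub_distrib, ← sum_sub_distrib]
  exact sum_le_sum fun x _ => mul_sub_mul_log_div_le (φ x) (hP0 x) (hQ0 x) (hac x)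

lemma sum_mul_exp_pos {X : Type*} [Fintype X] (P Q φ : X → ℝ) (hP0 : ∀ x, 0 ≤ P x)
    (hQ1 : ∑ x, Q x = 1) (hac : ∀ x, P x = 0 → Q x = 0) :
    0 < ∑ x, P x * exp (φ x) := by
  obtain ⟨x, -, hQx⟩ := exists_ne_zero_of_sum_ne_zero (hQ1.trans_ne one_ne_zero)
  have hPx : 0 < P x := (hP0 x).lt_of_ne' fun h => hQx (hac x h)
  exact sum_pos' (fun y _ => mul_nonneg (hP0 y) (exp_pos _).le)
    ⟨x, mem_univ x, mul_pos hPx (exp_pos _)⟩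

theorem donsker_varadhan_general {X : Type*} [Fintype X] (P Q : X → ℝ) (φ : X → ℝ)
    (hP0 : ∀ x, 0 ≤ P x)
    (hQ0 : ∀ x, 0 ≤ Q x) (hQ1 : ∑ x, Q x = 1)
    (hac : ∀ x, P x = 0 → Q x = 0) :
    Real.log (∑ x, P x * Real.exp (φ x)) ≥
      (∑ x, Q x * φ x) - ∑ x, Q x * Real.log (Q x / P x) := by
  set S := ∑ x, P x * exp (φ x)
  have hS : 0 < S := sum_mul_exp_pos P Q φ hP0 hQ1 hac
  have hshift := sum_mul_sub_sum_mul_log_div_le P Q (fun x => φ x - log S) hP0 hQ0 hac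
  have hmoment : ∑ x, P x * exp (φ x - log S) = 1 := by
    simp_rw [exp_sub, exp_log hS, mul_div_assoc', ← sum_div]
    exact div_self hS.ne'
  simp only [mul_sub, sum_sub_distrib, ← sum_mul, hQ1, hmoment] at hshift
  linarith

/-- Donsker–Varadhan variational inequality on a finite sample space. -/
theorem donsker_varadhan {X : Type*} [Fintype X] (P Q : X → ℝ) (φ : X → ℝ)
    (hP0 : ∀ x, 0 ≤ P x) (hP1 : ∑ x, P x = 1)
    (hQ0 : ∀ x, 0 ≤ Q x) (hQ1 : ∑ x, Q x = 1)
    (hac : ∀ x, P x = 0 → Q x = 0) :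
    Real.log (∑ x, P x * Real.exp (φ x)) ≥
      (∑ x, Q x * φ x) - ∑ x, Q x * Real.log (Q x / P x) :=
  donsker_varadhan_general P Q φ hP0 hQ0 hQ1 hac
end

section
/- Let α > 1 and p, q > 1 with 1/p + 1/q = 1. For joint distributions on finite sets, with S' = (Z'_1,…,Z'_n) i.i.d. from μ' and S = (Z_1,…,Z_n) i.i.d. from μ (with all required positivity of densities), the Rényi divergence satisfies D_α(P_{W'S'} ‖ P_{W'} P_S) ≤ D_{1+(α−1)p}(P_{W'S'} ‖ P_{W'} P_{S'}) + n · D_{1+(α−1)q}(μ'‖μ). -/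
/-!
With `Q = P_{W'} μ^{⊗n}` and `R = P_{W'} P_{S'}`, write
`Q (P/Q)^α = P^{1/p} (P/R)^{α-1} · P^{1/q} (R/Q)^{α-1}` and apply Hölder's inequality
to the sum over the joint space. The `p`-th power of the first factor sums to the Rényi moment
of order `1 + (α-1)p` of `P` against `R`. Since `R/Q` depends only on the data
coordinate, the `q`-th power of the second factor sums, after marginalising `P` to `μ'^{⊗n}`,
to the Rényi moment of order `1 + (α-1)q` of `μ'^{⊗n}` against `μ^{⊗n}`, which is the `n`-th
power of that of `μ'` against `μ`.
-/

open scoped BigOperators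

/-- Rényi divergence of order α between two densities on a finite set. -/
noncomputable def renyiDiv {X : Type*} [Fintype X] (α : ℝ) (p q : X → ℝ) : ℝ :=
  (1 / (α - 1)) * Real.log (∑ x, q x * (p x / q x) ^ α)

open Finset

lemma mul_div_rpow_one_add {a b : ℝ} (e : ℝ) (ha : 0 < a) (hb : 0 < b) :
    b * (a / b) ^ (1 + e) = a * (a / b) ^ e := by
  rw [Real.rpow_add (div_pos ha hb), Real.rpow_one, ← mul_assoc, mul_div_cancel₀ _ hb.ne']

lemma rpow_one_div_mul_rpow_rpow {a t r : ℝ} (e : ℝ) (ha : 0 ≤ a) (ht : 0 ≤ t) (hr : r ≠ 0) :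
    (a ^ (1 / r) * t ^ e) ^ r = a * t ^ (e * r) := by
  rw [Real.mul_rpow (by positivity) (by positivity), ← Real.rpow_mul ha, ← Real.rpow_mul ht,
    one_div, inv_mul_cancel₀ hr, Real.rpow_one]

section Holder

variable {X : Type*} [Fintype X] {P Q R : X → ℝ} {α p q : ℝ}

lemma sum_mul_div_rpow_le_holder (hpq : p.HolderConjugate q)
    (hP : ∀ x, 0 < P x) (hQ : ∀ x, 0 < Q x) (hR : ∀ x, 0 < R x) :
    ∑ x, Q x * (P x / Q x) ^ α ≤
      (∑ x, R x * (P x / R x) ^ (1 + (α - 1) * p)) ^ (1 / p) *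
        (∑ x, P x * (R x / Q x) ^ ((α - 1) * q)) ^ (1 / q) := by
  set f : X → ℝ := fun x => P x ^ (1 / p) * (P x / R x) ^ (α - 1)
  set g : X → ℝ := fun x => P x ^ (1 / q) * (R x / Q x) ^ (α - 1)
  have hsplit : ∀ x, Q x * (P x / Q x) ^ α = f x * g x := fun x => by
    have hP_split : P x ^ (1 / p) * P x ^ (1 / q) = P x := by
      rw [← Real.rpow_add (hP x), one_div, one_div, hpq.inv_add_inv_eq_one, Real.rpow_one]
    have hratio : (P x / R x) ^ (α - 1) * (R x / Q x) ^ (α - 1) = (P x / Q x) ^ (α - 1) := by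
      rw [← Real.mul_rpow (div_pos (hP x) (hR x)).le (div_pos (hR x) (hQ x)).le,
        div_mul_div_cancel₀ (hR x).ne']
    calc Q x * (P x / Q x) ^ α = P x * (P x / Q x) ^ (α - 1) := by
          simpa using mul_div_rpow_one_add (α - 1) (hP x) (hQ x)
      _ = P x ^ (1 / p) * P x ^ (1 / q) * ((P x / R x) ^ (α - 1) * (R x / Q x) ^ (α - 1)) := by
          rw [hP_split, hratio]
      _ = f x * g x := by ring
  have hf : ∀ x, f x ^ p = R x * (P x / R x) ^ (1 + (α - 1) * p) := fun x => by
    rw [rpow_one_div_mul_rpow_rpow _ (hP x).le (div_pos (hP x) (hR x)).le hpq.ne_zero,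
      mul_div_rpow_one_add _ (hP x) (hR x)]
  have hg : ∀ x, g x ^ q = P x * (R x / Q x) ^ ((α - 1) * q) := fun x =>
    rpow_one_div_mul_rpow_rpow _ (hP x).le (div_pos (hR x) (hQ x)).le hpq.symm.ne_zero
  simp only [hsplit, ← hf, ← hg]
  exact Real.inner_le_Lp_mul_Lq_of_nonneg univ hpq
    (fun x _ => by have := hP x; have := hR x; positivity)
    (fun x _ => by have := hP x; have := hQ x; have := hR x; positivity)

lemma renyiDiv_le_add_log (hα : 1 < α)
    (hpq : p.HolderConjugate q) (hP : ∀ x, 0 < P x) (hQ : ∀ x, 0 < Q x) (hR : ∀ x, 0 < R x) :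
    renyiDiv α P Q ≤ renyiDiv (1 + (α - 1) * p) P R +
      1 / ((α - 1) * q) * Real.log (∑ x, P x * (R x / Q x) ^ ((α - 1) * q)) := by
  rcases isEmpty_or_nonempty X with _ | _
  · simp [renyiDiv]
  have hpos : ∀ {f : X → ℝ}, (∀ x, 0 < f x) → 0 < ∑ x, f x :=
    fun hf => sum_pos (fun x _ => hf x) univ_nonempty
  have hT := hpos fun x => mul_pos (hQ x) (Real.rpow_pos_of_pos (div_pos (hP x) (hQ x)) α)
  have hA := hpos fun x =>
    mul_pos (hR x) (Real.rpow_pos_of_pos (div_pos (hP x) (hR x)) (1 + (α - 1) * p))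
  have hB := hpos fun x =>
    mul_pos (hP x) (Real.rpow_pos_of_pos (div_pos (hR x) (hQ x)) ((α - 1) * q))
  have hlog := Real.log_le_log hT (sum_mul_div_rpow_le_holder (α := α) hpq hP hQ hR)
  rw [Real.log_mul (by positivity) (by positivity), Real.log_rpow hA, Real.log_rpow hB] at hlog
  have hα' : 0 < α - 1 := by linarith
  have hp := hpq.pos
  have hq := hpq.symm.pos
  calc renyiDiv α P Q
        ≤ 1 / (α - 1) * (1 / p * Real.log (∑ x, R x * (P x / R x) ^ (1 + (α - 1) * p)) +
          1 / q * Real.log (∑ x, P x * (R x / Q x) ^ ((α - 1) * q))) :=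
        mul_le_mul_of_nonneg_left hlog (by positivity)
    _ = _ := by
        rw [renyiDiv, add_sub_cancel_left]
        field_simp

end Holder

lemma renyiDiv_pi {ι Z : Type*} [Fintype ι] [DecidableEq ι] [Fintype Z] (β : ℝ) {ν ρ : Z → ℝ}
    (hν : ∀ z, 0 ≤ ν z) (hρ : ∀ z, 0 ≤ ρ z) :
    renyiDiv β (fun s : ι → Z => ∏ i, ν (s i)) (fun s => ∏ i, ρ (s i)) =
      Fintype.card ι * renyiDiv β ν ρ := by
  have hmoment : ∑ s : ι → Z, (∏ i, ρ (s i)) * ((∏ i, ν (s i)) / ∏ i, ρ (s i)) ^ β =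
      (∑ z, ρ z * (ν z / ρ z) ^ β) ^ Fintype.card ι := by
    rw [← card_univ, ← prod_const, Fintype.prod_sum]
    refine sum_congr rfl fun s _ => ?_
    rw [← prod_div_distrib, ← Real.finsetProd_rpow _ _ fun i _ => div_nonneg (hν _) (hρ _),
      ← prod_mul_distrib]
  rw [renyiDiv, renyiDiv, hmoment, Real.log_pow]
  ring

theorem renyi_holder_decomposition_general {W Z : Type*} [Fintype W] [Fintype Z]
    (n : ℕ) (α p q : ℝ) (hα : 1 < α) (hp : 1 < p)
    (hpq : 1 / p + 1 / q = 1)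
    (μ μ' : Z → ℝ) (hμ : ∀ z, 0 < μ z)
    (hμ' : ∀ z, 0 < μ' z)
    (P : W × (Fin n → Z) → ℝ) (hP0 : ∀ x, 0 < P x)
    -- S' is i.i.d. from μ' (marginal of the joint on the data is μ'^{⊗n})
    (hmargS : ∀ s : Fin n → Z, (∑ w, P (w, s)) = ∏ i, μ' (s i)) :
    renyiDiv α P (fun x => (∑ s, P (x.1, s)) * ∏ i, μ (x.2 i)) ≤
      renyiDiv (1 + (α - 1) * p) P
          (fun x => (∑ s, P (x.1, s)) * ∑ w, P (w, x.2)) +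
        n * renyiDiv (1 + (α - 1) * q) μ' μ := by
  have hconj : p.HolderConjugate q :=
    Real.holderConjugate_iff.mpr ⟨hp, by simpa only [one_div] using hpq⟩
  have hPW : ∀ x : W × (Fin n → Z), 0 < ∑ s, P (x.1, s) :=
    fun x => sum_pos (fun s _ => hP0 _) ⟨x.2, mem_univ _⟩
  have hμn : ∀ s : Fin n → Z, 0 < ∏ i, μ (s i) := fun s => prod_pos fun i _ => hμ _
  have hμ'n : ∀ s : Fin n → Z, 0 < ∏ i, μ' (s i) := fun s => prod_pos fun i _ => hμ' _
  have hratio : ∀ x : W × (Fin n → Z),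
      (∑ s, P (x.1, s)) * (∑ w, P (w, x.2)) / ((∑ s, P (x.1, s)) * ∏ i, μ (x.2 i)) =
        (∏ i, μ' (x.2 i)) / ∏ i, μ (x.2 i) := fun x => by
    rw [mul_div_mul_left _ _ (hPW x).ne', hmargS]
  calc _ ≤ _ := renyiDiv_le_add_log hα hconj hP0 (fun x => mul_pos (hPW x) (hμn _))
          (fun x => mul_pos (hPW x) (sum_pos (fun w _ => hP0 _) ⟨x.1, mem_univ _⟩))
    _ = renyiDiv (1 + (α - 1) * p) P (fun x => (∑ s, P (x.1, s)) * ∑ w, P (w, x.2)) +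
          renyiDiv (1 + (α - 1) * q) (fun s : Fin n → Z => ∏ i, μ' (s i))
            (fun s => ∏ i, μ (s i)) := by
        congr 1
        rw [renyiDiv, add_sub_cancel_left]
        simp only [hratio]
        rw [Fintype.sum_prod_type_right]
        simp only [← sum_mul, hmargS, mul_div_rpow_one_add _ (hμ'n _) (hμn _)]
    _ = _ := by
        rw [renyiDiv_pi _ (fun z => (hμ' z).le) (fun z => (hμ z).le), Fintype.card_fin]

/-- Hölder decomposition of the Rényi divergence relative to a mismatched
reference product measure. -/
theorem renyi_holder_decomposition {W Z : Type*} [Fintype W] [Fintype Z]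
    (n : ℕ) (α p q : ℝ) (hα : 1 < α) (hp : 1 < p) (hq : 1 < q)
    (hpq : 1 / p + 1 / q = 1)
    (μ μ' : Z → ℝ) (hμ : ∀ z, 0 < μ z) (hμ1 : ∑ z, μ z = 1)
    (hμ' : ∀ z, 0 < μ' z) (hμ'1 : ∑ z, μ' z = 1)
    (P : W × (Fin n → Z) → ℝ) (hP0 : ∀ x, 0 < P x) (hP1 : ∑ x, P x = 1)
    -- S' is i.i.d. from μ' (marginal of the joint on the data is μ'^{⊗n})
    (hmargS : ∀ s : Fin n → Z, (∑ w, P (w, s)) = ∏ i, μ' (s i)) :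
    renyiDiv α P (fun x => (∑ s, P (x.1, s)) * ∏ i, μ (x.2 i)) ≤
      renyiDiv (1 + (α - 1) * p) P
          (fun x => (∑ s, P (x.1, s)) * ∑ w, P (w, x.2)) +
        n * renyiDiv (1 + (α - 1) * q) μ' μ :=
  renyi_holder_decomposition_general n α p q hα hp hpq μ μ' hμ hμ' P hP0 hmargS
end

section
/- Let S' = (Z'_1,…,Z'_n) be i.i.d. from μ' on a finite set Z, W a finite hypothesis set, ℓ: W × Z → ℝ a loss, and μ a distribution on Z with L_μ(w) = E_{Z∼μ}[ℓ(w,Z)]. For any Markov kernel P_{W'|S'} with I(W'; S') ≤ r, the generalization error satisfies E[L_μ(W') − (1/n)Σ_i ℓ(W', Z'_i)] ≤ D₂(r/n), where D₂(ρ) = max_{P_{Ŵ|Z'}: I(Ŵ;Z') ≤ ρ} E[L_μ(Ŵ) − ℓ(Ŵ, Z')] with Z' ∼ μ'. -/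
open scoped BigOperators

noncomputable def mutInfo {A B : Type*} [Fintype A] [Fintype B]
    (p : A × B → ℝ) : ℝ :=
  ∑ x : A × B,
    p x * Real.log (p x / ((∑ b, p (x.1, b)) * ∑ a, p (a, x.2)))

noncomputable def D2 {W Z : Type*} [Fintype W] [Fintype Z]
    (μ μ' : Z → ℝ) (ℓ : W → Z → ℝ) (ρ : ℝ) : ℝ :=
  sSup {g : ℝ | ∃ p : W × Z → ℝ, (∀ x, 0 ≤ p x) ∧ (∑ x, p x = 1) ∧
    (∀ z, (∑ w, p (w, z)) = μ' z) ∧ mutInfo p ≤ ρ ∧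
    g = ∑ x : W × Z, p x * ((∑ z, μ z * ℓ x.1 z) - ℓ x.1 x.2)}

/-!
Let `P_i` be the joint law of `(W', Z'_i)` and `P̄ = (1/n) ∑ P_i`. The generalization error of
the algorithm is the single-letter error of `P̄`, and `P̄` has `Z`-marginal `μ'`, so it only
remains to show `I(P̄) ≤ r / n`.

All `P_i` share the marginals `P_{W'}` and `μ'`, so on them mutual information is the relative
entropy to the fixed law `P_{W'} ⊗ μ'`, which is convex: `I(P̄) ≤ (1/n) ∑ I(P_i)`.
Because `S'` has the product law `μ'^{⊗n}`, the defect `I(W'; S') - ∑ I(W'; Z'_i)` is the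
relative entropy of `P_{W'S'}` to the law under which the `Z'_i` are conditionally independent
given `W'`, hence nonnegative. Together, `I(P̄) ≤ I(W'; S') / n ≤ r / n`.
-/

open Finset Real

lemma sub_le_mul_log_div {a b : ℝ} (ha : 0 ≤ a) (hb : 0 ≤ b) (hab : 0 < a → 0 < b) :
    a - b ≤ a * log (a / b) := by
  rcases ha.eq_or_lt with rfl | ha
  · simpa using hb
  have hb := hab ha
  have key : 1 - (a / b)⁻¹ ≤ log (a / b) := one_sub_inv_le_log_of_pos (by positivity)
  calc a - b = a * (1 - (a / b)⁻¹) := by field_simp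
    _ ≤ a * log (a / b) := by gcongr

lemma sum_mul_log_div_nonneg {ι : Type*} [Fintype ι] {a b : ι → ℝ} (ha : ∀ i, 0 ≤ a i)
    (hb : ∀ i, 0 ≤ b i) (hab : ∀ i, 0 < a i → 0 < b i) (hsum : ∑ i, b i ≤ ∑ i, a i) :
    0 ≤ ∑ i, a i * log (a i / b i) := by
  have := sum_le_sum fun i (_ : i ∈ univ) => sub_le_mul_log_div (ha i) (hb i) (hab i)
  rw [sum_sub_distrib] at this
  linarith

lemma convexOn_mul_log_div (b : ℝ) : ConvexOn ℝ (Set.Ici 0) fun t => t * log (t / b) := by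
  rcases eq_or_ne b 0 with rfl | hb
  · simpa using convexOn_const (0 : ℝ) (convex_Ici 0)
  refine (convexOn_mul_log.sub ((LinearMap.mulRight ℝ (log b)).concaveOn (convex_Ici 0))).congr
    fun t (ht : 0 ≤ t) => ?_
  rcases ht.eq_or_lt with rfl | ht
  · simp
  · simp [log_div ht.ne' hb, mul_sub]

lemma log_div_mul_prod_sub_sum {ι : Type*} [Fintype ι] {c d : ℝ} {p u : ι → ℝ} (hc : 0 < c)
    (hd : 0 < d) (hp : ∀ i, 0 < p i) (hu : ∀ i, 0 < u i) :
    log (c / (d * ∏ i, u i)) - ∑ i, log (p i / (d * u i)) = log (c / (d * ∏ i, p i / d)) := by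
  have hpd : ∀ i, 0 < p i / d := fun i => div_pos (hp i) hd
  rw [← div_div, ← div_div, log_div (by positivity) (prod_pos fun i _ => hu i).ne',
    log_div (by positivity) (prod_pos fun i _ => hpd i).ne', log_prod fun i _ => (hu i).ne',
    log_prod fun i _ => (hpd i).ne']
  simp only [← div_div, fun i => log_div (hpd i).ne' (hu i).ne', sum_sub_distrib]
  ring

lemma mutInfo_eq_of_marginals {A B : Type*} [Fintype A] [Fintype B] {p : A × B → ℝ}
    {f : A → ℝ} {g : B → ℝ} (hf : ∀ a, ∑ b, p (a, b) = f a) (hg : ∀ b, ∑ a, p (a, b) = g b) :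
    mutInfo p = ∑ x, p x * log (p x / (f x.1 * g x.2)) := by
  simp only [mutInfo, hf, hg]

lemma sum_mixture_eq {α β κ : Type*} [Fintype κ] (s : Finset β) (e : β → α) {c : κ → ℝ}
    (hc : ∑ k, c k = 1) {p : κ → α → ℝ} {v : ℝ} (hp : ∀ k, ∑ y ∈ s, p k (e y) = v) :
    ∑ y ∈ s, ∑ k, c k * p k (e y) = v := by
  rw [sum_comm]
  simp only [← mul_sum, hp, ← sum_mul, hc, one_mul]

lemma mutInfo_mixture_le {κ A B : Type*} [Fintype κ] [Fintype A] [Fintype B] {c : κ → ℝ}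
    (hc0 : ∀ k, 0 ≤ c k) (hc1 : ∑ k, c k = 1) {p : κ → A × B → ℝ} (hp0 : ∀ k x, 0 ≤ p k x)
    {f : A → ℝ} {g : B → ℝ} (hf : ∀ k a, ∑ b, p k (a, b) = f a)
    (hg : ∀ k b, ∑ a, p k (a, b) = g b) :
    mutInfo (fun x => ∑ k, c k * p k x) ≤ ∑ k, c k * mutInfo (p k) := by
  rw [mutInfo_eq_of_marginals (fun a => sum_mixture_eq _ _ hc1 (hf · a))
    (fun b => sum_mixture_eq _ _ hc1 (hg · b))]
  simp only [fun k => mutInfo_eq_of_marginals (hf k) (hg k), mul_sum]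
  rw [sum_comm]
  refine sum_le_sum fun x _ => ?_
  simpa only [smul_eq_mul] using (convexOn_mul_log_div (f x.1 * g x.2)).map_sum_le
    (fun k _ => hc0 k) hc1 (fun k _ => hp0 k x)

lemma sum_ite_prod_eq {ι Z : Type*} [Fintype ι] [DecidableEq ι] [Fintype Z] [DecidableEq Z]
    {μ : Z → ℝ} (hμ : ∑ z, μ z = 1) (i : ι) (z : Z) :
    (∑ s : ι → Z, if s i = z then ∏ j, μ (s j) else 0) = μ z := by
  let ν : ι → Z → ℝ := fun j y => if j = i ∧ y ≠ z then 0 else μ y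
  have hν : ∀ s : ι → Z, (if s i = z then ∏ j, μ (s j) else 0) = ∏ j, ν j (s j) := by
    intro s
    rw [Fintype.prod_eq_mul_prod_compl i, Fintype.prod_eq_mul_prod_compl i (fun j => ν j (s j))]
    have hrest : ∏ j ∈ {i}ᶜ, ν j (s j) = ∏ j ∈ {i}ᶜ, μ (s j) :=
      prod_congr rfl fun j hj => by simp_all [ν]
    split_ifs with h <;> simp [ν, h, hrest]
  simp only [hν, ← Fintype.prod_sum]
  rw [Fintype.prod_eq_mul_prod_compl i]
  have hrest : ∏ j ∈ {i}ᶜ, ∑ y, ν j y = 1 :=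
    prod_eq_one fun j hj => by simp_all [ν]
  simp [ν, hrest]

section CoordJoint

variable {A Z ι : Type*} [Fintype Z] [Fintype ι] [DecidableEq ι] [DecidableEq Z]

noncomputable def coordJoint (q : A × (ι → Z) → ℝ) (i : ι) (x : A × Z) : ℝ :=
  ∑ s : ι → Z, if s i = x.2 then q (x.1, s) else 0

-- The leading factor makes the junk value `0 / 0 = 0` harmless where `∑ s, q (a, s) = 0`.
noncomputable def condIndepLaw [Fintype A] (q : A × (ι → Z) → ℝ) (x : A × (ι → Z)) : ℝ :=
  (∑ s, q (x.1, s)) * ∏ i, coordJoint q i (x.1, x.2 i) / ∑ s, q (x.1, s)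

variable {q : A × (ι → Z) → ℝ}

lemma coordJoint_nonneg (hq : ∀ x, 0 ≤ q x) (i : ι) (x : A × Z) : 0 ≤ coordJoint q i x :=
  sum_nonneg fun s _ => by split_ifs <;> simp [hq]

lemma le_coordJoint (hq : ∀ x, 0 ≤ q x) (i : ι) (a : A) (s : ι → Z) :
    q (a, s) ≤ coordJoint q i (a, s i) := by
  simpa [coordJoint] using single_le_sum (f := fun t : ι → Z => if t i = s i then q (a, t) else 0)
    (fun t _ => by split_ifs <;> simp [hq]) (mem_univ s)

lemma sum_coordJoint_fiber_mul (q : A × (ι → Z) → ℝ) (i : ι) (a : A) (F : Z → ℝ) :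
    ∑ z, coordJoint q i (a, z) * F z = ∑ s, q (a, s) * F (s i) := by
  simp only [coordJoint, sum_mul, ite_mul, zero_mul]
  rw [sum_comm]
  simp

lemma sum_coordJoint_left (q : A × (ι → Z) → ℝ) (i : ι) (a : A) :
    ∑ z, coordJoint q i (a, z) = ∑ s, q (a, s) := by
  simpa using sum_coordJoint_fiber_mul q i a 1

variable [Fintype A]

lemma sum_coordJoint_mul (q : A × (ι → Z) → ℝ) (i : ι) (F : A × Z → ℝ) :
    ∑ x, coordJoint q i x * F x = ∑ x, q x * F (x.1, x.2 i) := by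
  simp only [Fintype.sum_prod_type, sum_coordJoint_fiber_mul q i _ (fun z => F (_, z))]

lemma sum_mixture_coordJoint_mul (q : A × (ι → Z) → ℝ) (c : ι → ℝ) (F : A × Z → ℝ) :
    ∑ x, (∑ i, c i * coordJoint q i x) * F x = ∑ x, q x * ∑ i, c i * F (x.1, x.2 i) := by
  calc _ = ∑ i, c i * ∑ x, coordJoint q i x * F x := by
        simp only [sum_mul, mul_sum, mul_assoc]
        exact sum_comm
    _ = _ := by
        simp only [sum_coordJoint_mul, mul_sum]
        rw [sum_comm]
        simp only [mul_left_comm]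

lemma sum_coordJoint (q : A × (ι → Z) → ℝ) (i : ι) : ∑ x, coordJoint q i x = ∑ x, q x := by
  simpa using sum_coordJoint_mul q i 1

lemma sum_coordJoint_right {μ : Z → ℝ} (hμ : ∑ z, μ z = 1)
    (hq : ∀ s, ∑ a, q (a, s) = ∏ j, μ (s j)) (i : ι) (z : Z) :
    ∑ a, coordJoint q i (a, z) = μ z := by
  rw [← sum_ite_prod_eq hμ i z]
  simp only [coordJoint]
  rw [sum_comm]
  refine sum_congr rfl fun s _ => ?_
  split_ifs <;> simp [hq]

lemma condIndepLaw_nonneg (hq : ∀ x, 0 ≤ q x) (x : A × (ι → Z)) : 0 ≤ condIndepLaw q x :=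
  mul_nonneg (sum_nonneg fun _ _ => hq _)
    (prod_nonneg fun _ _ => div_nonneg (coordJoint_nonneg hq _ _) (sum_nonneg fun _ _ => hq _))

lemma condIndepLaw_pos (hq : ∀ x, 0 ≤ q x) {x : A × (ι → Z)} (hx : 0 < q x) :
    0 < condIndepLaw q x := by
  have hqA : 0 < ∑ s, q (x.1, s) :=
    hx.trans_le (single_le_sum (f := fun s => q (x.1, s)) (fun s _ => hq _) (mem_univ x.2))
  exact mul_pos hqA (prod_pos fun i _ => div_pos (hx.trans_le (le_coordJoint hq i _ _)) hqA)

lemma sum_condIndepLaw (q : A × (ι → Z) → ℝ) : ∑ x, condIndepLaw q x = ∑ x, q x := by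
  simp only [Fintype.sum_prod_type]
  refine sum_congr rfl fun a _ => ?_
  simp only [condIndepLaw, ← mul_sum]
  rw [← Fintype.prod_sum (fun i z => coordJoint q i (a, z) / ∑ s, q (a, s))]
  simp only [← sum_div, sum_coordJoint_left]
  rcases eq_or_ne (∑ s, q (a, s)) 0 with h | h <;> simp [h]

lemma mutInfo_sub_sum_mutInfo_coordJoint {μ : Z → ℝ} (hμ : ∑ z, μ z = 1)
    (hq0 : ∀ x, 0 ≤ q x) (hq : ∀ s, ∑ a, q (a, s) = ∏ j, μ (s j)) :
    mutInfo q - ∑ i, mutInfo (coordJoint q i) = ∑ x, q x * log (q x / condIndepLaw q x) := by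
  set qA : A → ℝ := fun a => ∑ s, q (a, s)
  have hK : ∀ i, mutInfo (coordJoint q i) =
      ∑ x, q x * log (coordJoint q i (x.1, x.2 i) / (qA x.1 * μ (x.2 i))) := fun i => by
    rw [mutInfo_eq_of_marginals (sum_coordJoint_left q i) (sum_coordJoint_right hμ hq i),
      sum_coordJoint_mul q i (fun x => log (coordJoint q i x / (qA x.1 * μ x.2)))]
  rw [mutInfo_eq_of_marginals (fun _ => rfl) hq]
  simp only [hK]
  rw [sum_comm, ← sum_sub_distrib]
  refine sum_congr rfl fun ⟨a, s⟩ _ => ?_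
  rcases (hq0 (a, s)).eq_or_lt with h | h
  · simp [← h]
  have hp : ∀ i, 0 < coordJoint q i (a, s i) := fun i => h.trans_le (le_coordJoint hq0 i a s)
  have hμs : ∀ i, 0 < μ (s i) := fun i => (hp i).trans_le <| by
    rw [← sum_coordJoint_right hμ hq i (s i)]
    exact single_le_sum (f := fun a' => coordJoint q i (a', s i))
      (fun _ _ => coordJoint_nonneg hq0 _ _) (mem_univ a)
  have hqA : 0 < qA a :=
    h.trans_le (single_le_sum (f := fun t => q (a, t)) (fun t _ => hq0 _) (mem_univ s))
  rw [← mul_sum, ← mul_sub, log_div_mul_prod_sub_sum h hqA hp hμs]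
  rfl

lemma sum_mutInfo_coordJoint_le {μ : Z → ℝ} (hμ : ∑ z, μ z = 1) (hq0 : ∀ x, 0 ≤ q x)
    (hq : ∀ s, ∑ a, q (a, s) = ∏ j, μ (s j)) :
    ∑ i, mutInfo (coordJoint q i) ≤ mutInfo q := by
  have := sum_mul_log_div_nonneg hq0 (condIndepLaw_nonneg hq0) (fun _ => condIndepLaw_pos hq0)
    (sum_condIndepLaw q).le
  linarith [mutInfo_sub_sum_mutInfo_coordJoint hμ hq0 hq]

end CoordJoint

lemma le_D2 {W Z : Type*} [Fintype W] [Fintype Z] {μ μ' : Z → ℝ} {ℓ : W → Z → ℝ} {ρ : ℝ}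
    {p : W × Z → ℝ} (hp0 : ∀ x, 0 ≤ p x) (hp1 : ∑ x, p x = 1)
    (hpZ : ∀ z, ∑ w, p (w, z) = μ' z) (hI : mutInfo p ≤ ρ) :
    ∑ x, p x * ((∑ z, μ z * ℓ x.1 z) - ℓ x.1 x.2) ≤ D2 μ μ' ℓ ρ := by
  set G : W × Z → ℝ := fun x => (∑ z, μ z * ℓ x.1 z) - ℓ x.1 x.2
  refine le_csSup ⟨∑ y, |G y|, ?_⟩ ⟨p, hp0, hp1, hpZ, hI, rfl⟩
  rintro g ⟨p', hp'0, hp'1, -, -, rfl⟩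
  calc ∑ x, p' x * G x ≤ ∑ x, p' x * ∑ y, |G y| :=
        sum_le_sum fun x _ => mul_le_mul_of_nonneg_left
          ((le_abs_self _).trans (single_le_sum (fun y _ => abs_nonneg (G y)) (mem_univ x)))
          (hp'0 x)
    _ = ∑ y, |G y| := by rw [← sum_mul, hp'1, one_mul]

theorem gen_le_D2_general {W Z : Type*} [Fintype W] [Fintype Z]
    (n : ℕ) (hn : 0 < n)
    (μ μ' : Z → ℝ)
    (hμ'1 : ∑ z, μ' z = 1)
    (ℓ : W → Z → ℝ) (r : ℝ)
    (q : W × (Fin n → Z) → ℝ) (hq0 : ∀ x, 0 ≤ q x) (hq1 : ∑ x, q x = 1)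
    (hmarg : ∀ s : Fin n → Z, (∑ w, q (w, s)) = ∏ i, μ' (s i))
    (hMI : mutInfo q ≤ r) :
    (∑ x : W × (Fin n → Z), q x *
        ((∑ z, μ z * ℓ x.1 z) - (1 / (n : ℝ)) * ∑ i, ℓ x.1 (x.2 i))) ≤
      D2 μ μ' ℓ (r / n) := by
  classical
  have hn' : (n : ℝ) ≠ 0 := by positivity
  have hc : ∑ _i : Fin n, (n : ℝ)⁻¹ = 1 := by simp [hn']
  have hgen : ∑ x : W × (Fin n → Z), q x *
        ((∑ z, μ z * ℓ x.1 z) - (1 / (n : ℝ)) * ∑ i, ℓ x.1 (x.2 i)) =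
      ∑ x, q x * ∑ i, (n : ℝ)⁻¹ * ((∑ z, μ z * ℓ x.1 z) - ℓ x.1 (x.2 i)) := by
    refine sum_congr rfl fun x _ => ?_
    simp only [← mul_sum, mul_sub, sum_sub_distrib, sum_const, card_univ, Fintype.card_fin,
      nsmul_eq_mul]
    field_simp
  rw [hgen, ← sum_mixture_coordJoint_mul q _ fun x => (∑ z, μ z * ℓ x.1 z) - ℓ x.1 x.2]
  refine le_D2
    (fun x => sum_nonneg fun i _ => mul_nonneg (by positivity) (coordJoint_nonneg hq0 i x))
    (sum_mixture_eq univ id hc fun i => (sum_coordJoint q i).trans hq1)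
    (fun z => sum_mixture_eq univ (·, z) hc fun i => sum_coordJoint_right hμ'1 hmarg i z) ?_
  calc mutInfo (fun x => ∑ i, (n : ℝ)⁻¹ * coordJoint q i x)
      ≤ ∑ i, (n : ℝ)⁻¹ * mutInfo (coordJoint q i) :=
        mutInfo_mixture_le (fun _ => by positivity) hc (fun i => coordJoint_nonneg hq0 i)
          (fun i => sum_coordJoint_left q i) (fun i => sum_coordJoint_right hμ'1 hmarg i)
    _ = (n : ℝ)⁻¹ * ∑ i, mutInfo (coordJoint q i) := (mul_sum ..).symm
    _ ≤ (n : ℝ)⁻¹ * r := by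
        gcongr
        exact (sum_mutInfo_coordJoint_le hμ'1 hq0 hmarg).trans hMI
    _ = r / n := by ring

/-- Single-letterized rate-distortion bound on the generalization error under
distribution mismatch: for any algorithm (Markov kernel given here by the joint
law q of (W', S') with S' ∼ μ'^{⊗n}) with I(W'; S') ≤ r, the generalization
error is at most D₂(r/n). -/
theorem gen_le_D2 {W Z : Type*} [Fintype W] [Fintype Z]
    (n : ℕ) (hn : 0 < n)
    (μ μ' : Z → ℝ) (hμ0 : ∀ z, 0 ≤ μ z) (hμ1 : ∑ z, μ z = 1)
    (hμ'0 : ∀ z, 0 ≤ μ' z) (hμ'1 : ∑ z, μ' z = 1)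
    (ℓ : W → Z → ℝ) (r : ℝ) (hr : 0 ≤ r)
    (q : W × (Fin n → Z) → ℝ) (hq0 : ∀ x, 0 ≤ q x) (hq1 : ∑ x, q x = 1)
    (hmarg : ∀ s : Fin n → Z, (∑ w, q (w, s)) = ∏ i, μ' (s i))
    (hMI : mutInfo q ≤ r) :
    (∑ x : W × (Fin n → Z), q x *
        ((∑ z, μ z * ℓ x.1 z) - (1 / (n : ℝ)) * ∑ i, ℓ x.1 (x.2 i))) ≤
      D2 μ μ' ℓ (r / n) :=
  gen_le_D2_general n hn μ μ' hμ'1 ℓ r q hq0 hq1 hmarg hMI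
end

section
/- Consider a rate-distortion problem with X ∼ ζ on a finite set X, a distortion d: X × X̂ → ℝ, and a distribution η on X. Define φ(λ) = sup_{x̂} log E_{X∼η}[e^{λ d(X,x̂)}] for λ ∈ (−b, 0). Then for every r ≥ 0, inf over kernels P_{X̂|X} with I(X̂;X) ≤ r of E[d(X,X̂)] is at least sup_{−b<λ<0} ( (1/λ)[r + D(ζ‖η)] + (1/λ)φ(λ) ). -/
open scoped BigOperators ENNReal

/-! For `λ < 0` and an admissible joint law `p`, the Donsker–Varadhan inequality for `p` against
`q = p_{X̂} × η` with test function `λ d` gives `λ E[d] ≤ D(p‖q) + log E_q[e^{λ d}]`. The chain rule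
`D(p‖q) = I(X̂;X) + D(ζ‖η)` bounds the first term by `r + D(ζ‖η)`, and `E_q[e^{λ d}]` is a
`p_{X̂}`-average of `E_η[e^{λ d(·,x̂)}] ≤ e^{φ(λ)}`; dividing by `λ < 0` gives the bound. The infimum
ranges over a nonempty set because the product law `uniform × ζ` has zero mutual information. -/

open Real Finset

noncomputable def relEntropy {α : Type*} [Fintype α] (p q : α → ℝ) : ℝ :=
  ∑ y, p y * log (p y / q y)

noncomputable def supCgf {X Xh : Type*} [Fintype X] (η : X → ℝ) (d : X → Xh → ℝ) (lam : ℝ) : ℝ :=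
  ⨆ xh, log (∑ x, η x * exp (lam * d x xh))

theorem mul_sub_log_div_le {p q : ℝ} (t : ℝ) (hp : 0 ≤ p) (hq : 0 ≤ q) (hpq : q = 0 → p = 0) :
    p * (t - log (p / q)) ≤ q * exp t - p := by
  rcases hp.eq_or_lt with rfl | hp
  · simpa using mul_nonneg hq (exp_pos t).le
  have hq_pos : 0 < q := hq.lt_of_ne fun h => hp.ne' (hpq h.symm)
  have hexp := add_one_le_exp (t - log (p / q))
  rw [exp_sub, exp_log (div_pos hp hq_pos)] at hexp
  have hmul := mul_le_mul_of_nonneg_left hexp hp.le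
  rw [show p * (exp t / (p / q)) = q * exp t by field_simp] at hmul
  linarith

theorem sum_mul_le_relEntropy_add_log_sum_mul_exp {α : Type*} [Fintype α] {p q : α → ℝ}
    (hp : ∀ y, 0 ≤ p y) (hp1 : ∑ y, p y = 1) (hq : ∀ y, 0 ≤ q y) (hpq : ∀ y, q y = 0 → p y = 0)
    (f : α → ℝ) :
    ∑ y, p y * f y ≤ relEntropy p q + log (∑ y, q y * exp (f y)) := by
  set Z := ∑ y, q y * exp (f y)
  have hZ : 0 < Z := by
    obtain ⟨y, -, hy⟩ := exists_ne_zero_of_sum_ne_zero (hp1 ▸ one_ne_zero)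
    exact sum_pos' (fun y _ => mul_nonneg (hq y) (exp_pos _).le)
      ⟨y, mem_univ y, mul_pos ((hq y).lt_of_ne fun h => hy (hpq y h.symm)) (exp_pos _)⟩
  have h := sum_le_sum fun y (_ : y ∈ univ) =>
    mul_sub_log_div_le (f y - log Z) (hp y) (hq y) (hpq y)
  simp only [exp_sub, exp_log hZ, mul_div_assoc', sum_sub_distrib, ← sum_div, hp1, mul_sub,
    ← sum_mul] at h
  have hZZ : Z / Z = 1 := div_self hZ.ne'
  unfold relEntropy
  linarith

theorem relEntropy_marginal_mul_eq_mutInfo_add {A B : Type*} [Fintype A] [Fintype B]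
    {p : A × B → ℝ} (hp : ∀ y, 0 ≤ p y) {η : B → ℝ} (hη : ∀ b, 0 < η b) :
    relEntropy p (fun y => (∑ b, p (y.1, b)) * η y.2) =
      mutInfo p + relEntropy (fun b => ∑ a, p (a, b)) η := by
  have hterm : ∀ y : A × B, p y * log (p y / ((∑ b, p (y.1, b)) * η y.2)) =
      p y * log (p y / ((∑ b, p (y.1, b)) * ∑ a, p (a, y.2))) +
        p y * log ((∑ a, p (a, y.2)) / η y.2) := by
    intro y
    rcases (hp y).eq_or_lt with h | h
    · simp [← h]
    have hA : 0 < ∑ b, p (y.1, b) :=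
      h.trans_le (single_le_sum (f := fun b => p (y.1, b)) (fun b _ => hp _) (mem_univ y.2))
    have hB : 0 < ∑ a, p (a, y.2) :=
      h.trans_le (single_le_sum (f := fun a => p (a, y.2)) (fun a _ => hp _) (mem_univ y.1))
    rw [log_div h.ne' (mul_pos hA (hη _)).ne', log_div h.ne' (mul_pos hA hB).ne',
      log_div hB.ne' (hη _).ne',
      log_mul hA.ne' (hη _).ne', log_mul hA.ne' hB.ne']
    ring
  simp only [relEntropy, mutInfo, hterm, sum_add_distrib, Fintype.sum_prod_type_right, ← sum_mul]

theorem log_sum_mul_le_iSup_log {ι : Type*} [Fintype ι] {w g : ι → ℝ} (hw : ∀ i, 0 ≤ w i)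
    (hw1 : ∑ i, w i = 1) (hg : ∀ i, 0 < g i) : log (∑ i, w i * g i) ≤ ⨆ i, log (g i) := by
  obtain ⟨i, -, hi⟩ := exists_ne_zero_of_sum_ne_zero (hw1 ▸ one_ne_zero)
  have hpos : 0 < ∑ i, w i * g i :=
    sum_pos' (fun j _ => mul_nonneg (hw j) (hg j).le)
      ⟨i, mem_univ i, mul_pos ((hw i).lt_of_ne' hi) (hg i)⟩
  have hg_le : ∀ j, g j ≤ exp (⨆ i, log (g i)) := fun j => by
    rw [← exp_log (hg j)]
    exact exp_le_exp.mpr (le_ciSup (f := fun i => log (g i)) (Set.finite_range _).bddAbove j)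
  rw [log_le_iff_le_exp hpos]
  calc ∑ i, w i * g i ≤ ∑ i, w i * exp (⨆ i, log (g i)) :=
        sum_le_sum fun j _ => mul_le_mul_of_nonneg_left (hg_le j) (hw j)
    _ = exp (⨆ i, log (g i)) := by rw [← sum_mul, hw1, one_mul]

theorem mutInfo_mul_eq_zero {A B : Type*} [Fintype A] [Fintype B] {μ : A → ℝ} {ν : B → ℝ}
    (hμ : ∑ a, μ a = 1) (hν : ∑ b, ν b = 1) : mutInfo (fun y : A × B => μ y.1 * ν y.2) = 0 := by
  simp [mutInfo, ← mul_sum, ← sum_mul, hμ, hν]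

theorem exists_coupling_mutInfo_eq_zero {X Xh : Type*} [Fintype X] [Fintype Xh] [Nonempty Xh]
    {ζ : X → ℝ} (hζ0 : ∀ x, 0 ≤ ζ x) (hζ1 : ∑ x, ζ x = 1) :
    ∃ p : Xh × X → ℝ, (∀ y, 0 ≤ p y) ∧ ∑ y, p y = 1 ∧ (∀ x, ∑ xh, p (xh, x) = ζ x) ∧
      mutInfo p = 0 := by
  have hunif : ∑ _xh : Xh, (Fintype.card Xh : ℝ)⁻¹ = 1 := by simp
  refine ⟨fun y => (Fintype.card Xh : ℝ)⁻¹ * ζ y.2, fun y => mul_nonneg (by positivity) (hζ0 _),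
    ?_, fun x => ?_, mutInfo_mul_eq_zero hunif hζ1⟩
  · rw [Fintype.sum_prod_type, ← hunif]
    simp [← mul_sum, hζ1]
  · dsimp only
    rw [← sum_mul, hunif, one_mul]

theorem le_expected_distortion_of_mutInfo_le {X Xh : Type*} [Fintype X] [Fintype Xh]
    {ζ η : X → ℝ} (hη : ∀ x, 0 < η x) (d : X → Xh → ℝ) {r lam : ℝ} (hlam : lam < 0)
    {p : Xh × X → ℝ} (hp0 : ∀ y, 0 ≤ p y) (hp1 : ∑ y, p y = 1)
    (hmarg : ∀ x, ∑ xh, p (xh, x) = ζ x) (hI : mutInfo p ≤ r) :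
    (1 / lam) * (r + relEntropy ζ η) + (1 / lam) * supCgf η d lam ≤
      ∑ y : Xh × X, p y * d y.2 y.1 := by
  obtain ⟨y₀, -, -⟩ := exists_ne_zero_of_sum_ne_zero (hp1 ▸ one_ne_zero)
  have : Nonempty X := ⟨y₀.2⟩
  set pXh : Xh → ℝ := fun xh => ∑ x, p (xh, x)
  have hpXh0 : ∀ xh, 0 ≤ pXh xh := fun xh => sum_nonneg fun x _ => hp0 _
  have hp_le : ∀ y : Xh × X, p y ≤ pXh y.1 := fun y =>
    single_le_sum (f := fun x => p (y.1, x)) (fun x _ => hp0 _) (mem_univ y.2)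
  have hDV := sum_mul_le_relEntropy_add_log_sum_mul_exp hp0 hp1
    (q := fun y => pXh y.1 * η y.2) (fun y => mul_nonneg (hpXh0 _) (hη _).le)
    (fun y hy => le_antisymm
      ((hp_le y).trans_eq ((mul_eq_zero.mp hy).resolve_right (hη _).ne')) (hp0 y))
    (fun y => lam * d y.2 y.1)
  have hchain : relEntropy p (fun y => pXh y.1 * η y.2) = mutInfo p + relEntropy ζ η := by
    rw [relEntropy_marginal_mul_eq_mutInfo_add hp0 hη, funext hmarg]
  have hZ : ∑ y : Xh × X, pXh y.1 * η y.2 * exp (lam * d y.2 y.1) =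
      ∑ xh, pXh xh * ∑ x, η x * exp (lam * d x xh) := by
    simp only [Fintype.sum_prod_type, mul_sum, mul_assoc]
  have hlogZ : log (∑ xh, pXh xh * ∑ x, η x * exp (lam * d x xh)) ≤ supCgf η d lam :=
    log_sum_mul_le_iSup_log hpXh0 (by rw [← hp1, Fintype.sum_prod_type])
      fun xh => sum_pos (fun x _ => mul_pos (hη x) (exp_pos _)) univ_nonempty
  have hE : lam * ∑ y : Xh × X, p y * d y.2 y.1 ≤ r + relEntropy ζ η + supCgf η d lam := by
    have hlinear :
        ∑ y : Xh × X, p y * (lam * d y.2 y.1) = lam * ∑ y : Xh × X, p y * d y.2 y.1 := by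
      rw [mul_sum]
      exact sum_congr rfl fun y _ => by ring
    rw [hZ] at hDV
    linarith
  rw [← mul_add, one_div_mul_eq_div, div_le_iff_of_neg hlam]
  linarith

theorem rate_distortion_lower_bound_general {X Xh : Type*} [Fintype X] [Fintype Xh]
    [Nonempty Xh]
    (ζ η : X → ℝ) (hζ0 : ∀ x, 0 ≤ ζ x) (hζ1 : ∑ x, ζ x = 1)
    (hη0 : ∀ x, 0 < η x)
    (d : X → Xh → ℝ) (b : ℝ≥0∞) (hb : 0 < b) (r : ℝ) (hr : 0 ≤ r) :
    sInf {v : ℝ | ∃ p : Xh × X → ℝ, (∀ y, 0 ≤ p y) ∧ (∑ y, p y = 1) ∧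
        (∀ x, (∑ xh, p (xh, x)) = ζ x) ∧ mutInfo p ≤ r ∧
        v = ∑ y : Xh × X, p y * d y.2 y.1} ≥
      sSup {v : ℝ | ∃ lam : ℝ, lam < 0 ∧ ENNReal.ofReal (-lam) < b ∧
        v = (1 / lam) * (r + ∑ x, ζ x * Real.log (ζ x / η x)) +
          (1 / lam) * ⨆ xh : Xh,
            Real.log (∑ x, η x * Real.exp (lam * d x xh))} := by
  obtain ⟨t, -, ht0, htb⟩ := ENNReal.lt_iff_exists_real_btwn.mp hb
  obtain ⟨p₀, hp₀0, hp₀1, hp₀marg, hp₀I⟩ := exists_coupling_mutInfo_eq_zero (Xh := Xh) hζ0 hζ1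
  refine csSup_le ⟨_, -t, by simpa using ht0, by rwa [neg_neg], rfl⟩ ?_
  rintro v ⟨lam, hlam, -, rfl⟩
  refine le_csInf ⟨_, p₀, hp₀0, hp₀1, hp₀marg, hp₀I ▸ hr, rfl⟩ ?_
  rintro s ⟨p, hp0, hp1, hmarg, hI, rfl⟩
  exact le_expected_distortion_of_mutInfo_le hη0 d hlam hp0 hp1 hmarg hI

/-- Lower bound on a generic rate-distortion function via a change of measure
(Theorem 3 of the paper).  Here ζ is the source distribution, η an auxiliary
distribution, d the distortion, b ∈ (0,∞] and
φ(λ) = sup_{x̂} log E_{X∼η}[e^{λ d(X,x̂)}]. -/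
theorem rate_distortion_lower_bound {X Xh : Type*} [Fintype X] [Fintype Xh]
    [Nonempty X] [Nonempty Xh]
    (ζ η : X → ℝ) (hζ0 : ∀ x, 0 ≤ ζ x) (hζ1 : ∑ x, ζ x = 1)
    (hη0 : ∀ x, 0 < η x) (hη1 : ∑ x, η x = 1)
    (d : X → Xh → ℝ) (b : ℝ≥0∞) (hb : 0 < b) (r : ℝ) (hr : 0 ≤ r) :
    sInf {v : ℝ | ∃ p : Xh × X → ℝ, (∀ y, 0 ≤ p y) ∧ (∑ y, p y = 1) ∧
        (∀ x, (∑ xh, p (xh, x)) = ζ x) ∧ mutInfo p ≤ r ∧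
        v = ∑ y : Xh × X, p y * d y.2 y.1} ≥
      sSup {v : ℝ | ∃ lam : ℝ, lam < 0 ∧ ENNReal.ofReal (-lam) < b ∧
        v = (1 / lam) * (r + ∑ x, ζ x * Real.log (ζ x / η x)) +
          (1 / lam) * ⨆ xh : Xh,
            Real.log (∑ x, η x * Real.exp (lam * d x xh))} :=
  rate_distortion_lower_bound_general ζ η hζ0 hζ1 hη0 d b hb r hr
end
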